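/- arXiv:2103.11065 — 2 statements merged into one kernel-verified Lean document; each statement's English description precedes it below -/
import Mathlib

section
/- (Approximate Value Iteration.) Let ε ≥ 0, let w_k : S → A → ℝ satisfy |w_k s a| ≤ ε for all k, s, a, and let (Ṽ_k) be the synchronous noisy value-iteration sequence defined from an arbitrary initial vector Ṽ_0 by Ṽ_{k+1}(s) = max_{a ∈ A} Σ_{s'} P s a s' · (R s a s' + γ · Ṽ_k s' + w_k s a) for every s ∈ S. Then limsup_{k→∞} ‖V* − Ṽ_k‖∞ ≤ ε/(1−γ), where V* is the unique fixed point of T. -/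
open Finset Filter

noncomputable def supNorm {S : Type*} [Fintype S] [Nonempty S] (V : S → ℝ) : ℝ :=
  Finset.univ.sup' Finset.univ_nonempty fun s => |V s|

noncomputable def bellmanT {S A : Type*} [Fintype S] [Fintype A] [Nonempty A]
    (P R : S → A → S → ℝ) (γ : ℝ) (V : S → ℝ) : S → ℝ :=
  fun s => Finset.univ.sup' Finset.univ_nonempty
    fun a => ∑ s', P s a s' * (R s a s' + γ * V s')

lemma abs_sup'_sub_sup'_le {α : Type*} (s : Finset α) (hs : s.Nonempty) (f g : α → ℝ) (c : ℝ)
    (h : ∀ a ∈ s, |f a - g a| ≤ c) : |s.sup' hs f - s.sup' hs g| ≤ c := by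
  rw [abs_sub_le_iff]
  constructor
  · rw [sub_le_iff_le_add]
    apply Finset.sup'_le
    intro a ha
    have h1 := h a ha
    rw [abs_sub_le_iff] at h1
    have h2 := Finset.le_sup' g ha
    linarith [h1.1]
  · rw [sub_le_iff_le_add]
    apply Finset.sup'_le
    intro a ha
    have h1 := h a ha
    rw [abs_sub_le_iff] at h1
    have h2 := Finset.le_sup' f ha
    linarith [h1.2]

theorem approximate_value_iteration (n : ℕ) [NeZero n] (A : Type*) [Fintype A] [Nonempty A]
    (P R : Fin n → A → Fin n → ℝ)
    (hP0 : ∀ s a s', 0 ≤ P s a s') (hP1 : ∀ s a, ∑ s', P s a s' = 1)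
    (γ : ℝ) (hγ0 : 0 ≤ γ) (hγ1 : γ < 1)
    (ε : ℝ) (hε : 0 ≤ ε)
    (w : ℕ → Fin n → A → ℝ) (hw : ∀ k s a, |w k s a| ≤ ε)
    (Vt : ℕ → Fin n → ℝ)
    (hVt : ∀ k s, Vt (k + 1) s =
      Finset.univ.sup' Finset.univ_nonempty fun a =>
        ∑ s', P s a s' * (R s a s' + γ * Vt k s' + w k s a))
    (Vstar : Fin n → ℝ) (hfix : bellmanT P R γ Vstar = Vstar) :
    Filter.limsup (fun k => supNorm (Vstar - Vt k)) Filter.atTop ≤ ε / (1 - γ) := by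
  set d : ℕ → ℝ := fun k => supNorm (Vstar - Vt k) with hd
  have hsub : ∀ k (s : Fin n), (Vstar - Vt k) s = Vstar s - Vt k s := fun _ _ => rfl
  have hdabs : ∀ k s, |Vstar s - Vt k s| ≤ d k := by
    intro k s
    exact Finset.le_sup' (f := fun s => |(Vstar - Vt k) s|) (Finset.mem_univ s)
  have hd0 : ∀ k, 0 ≤ d k := fun k => le_trans (abs_nonneg _) (hdabs k (Classical.arbitrary _))
  -- contraction with noise
  have hstep : ∀ k, d (k + 1) ≤ γ * d k + ε := by
    intro k
    apply Finset.sup'_le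
    intro s _
    rw [hsub]
    have hVs : Vstar s = Finset.univ.sup' Finset.univ_nonempty
        fun a => ∑ s', P s a s' * (R s a s' + γ * Vstar s') := by
      conv_lhs => rw [← hfix]
      rfl
    rw [hVs, hVt k s]
    apply abs_sup'_sub_sup'_le
    intro a _
    have heq : (∑ s', P s a s' * (R s a s' + γ * Vstar s')) -
        (∑ s', P s a s' * (R s a s' + γ * Vt k s' + w k s a)) =
        ∑ s', P s a s' * (γ * (Vstar s' - Vt k s') - w k s a) := by
      rw [← Finset.sum_sub_distrib]
      congr 1; ext s'; ring
    rw [heq]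
    calc |∑ s', P s a s' * (γ * (Vstar s' - Vt k s') - w k s a)|
        ≤ ∑ s', |P s a s' * (γ * (Vstar s' - Vt k s') - w k s a)| :=
          Finset.abs_sum_le_sum_abs _ _
      _ ≤ ∑ s', P s a s' * (γ * d k + ε) := by
          apply Finset.sum_le_sum
          intro s' _
          rw [abs_mul, abs_of_nonneg (hP0 s a s')]
          apply mul_le_mul_of_nonneg_left _ (hP0 s a s')
          calc |γ * (Vstar s' - Vt k s') - w k s a|
              ≤ |γ * (Vstar s' - Vt k s')| + |w k s a| := abs_sub _ _
            _ ≤ γ * d k + ε := by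
                rw [abs_mul, abs_of_nonneg hγ0]
                gcongr
                · exact hdabs k s'
                · exact hw k s a
      _ = γ * d k + ε := by rw [← Finset.sum_mul, hP1 s a, one_mul]
  -- geometric bound by induction
  have hbound : ∀ k, d k ≤ γ ^ k * d 0 + ε / (1 - γ) := by
    intro k
    induction k with
    | zero =>
      have : 0 ≤ ε / (1 - γ) := div_nonneg hε (by linarith)
      simp only [pow_zero, one_mul]
      linarith
    | succ k ih =>
      calc d (k + 1) ≤ γ * d k + ε := hstep k
        _ ≤ γ * (γ ^ k * d 0 + ε / (1 - γ)) + ε := by gcongr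
        _ = γ ^ (k + 1) * d 0 + (γ * (ε / (1 - γ)) + ε) := by ring
        _ = γ ^ (k + 1) * d 0 + ε / (1 - γ) := by
            have hne : (1:ℝ) - γ ≠ 0 := by linarith
            congr 1
            field_simp
            ring
  have htend : Tendsto (fun k => γ ^ k * d 0 + ε / (1 - γ)) atTop (nhds (ε / (1 - γ))) := by
    have h0 : Tendsto (fun k : ℕ => γ ^ k * d 0) atTop (nhds 0) := by
      have := tendsto_pow_atTop_nhds_zero_of_lt_one hγ0 hγ1
      simpa using this.mul_const (d 0)
    simpa using h0.add tendsto_const_nhds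
  have hls := htend.limsup_eq
  calc limsup d atTop ≤ limsup (fun k => γ ^ k * d 0 + ε / (1 - γ)) atTop := by
        refine limsup_le_limsup (Eventually.of_forall hbound) ?_ ?_
        · exact isCoboundedUnder_le_of_eventually_le atTop (x := 0) (Eventually.of_forall hd0)
        · exact htend.isBoundedUnder_le
    _ = ε / (1 - γ) := hls
end

section
/- Asynchronous recursion over sweeps: let ε ≥ 0, let (σ_k) be a sequence of states, let (V_k) satisfy V_{k+1} = F_{σ_k} V_k, and let (Ṽ_k) satisfy Ṽ_{k+1} = F̃_k Ṽ_k where (F̃_k W)(σ_k) = (T W)(σ_k) + w̃_k with |w̃_k| ≤ ε and (F̃_k W)(s) = W(s) for s ≠ σ_k. Suppose k ≤ k' are indices such that every state of S appears among σ_k, …, σ_{k'−1}. Then ‖V_{k'} − Ṽ_{k'}‖∞ ≤ γ ‖V_k − Ṽ_k‖∞ + (k' − k) · ε. -/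
open Finset Filter

noncomputable def asyncF {S A : Type*} [Fintype S] [Nonempty S] [DecidableEq S]
    [Fintype A] [Nonempty A]
    (P R : S → A → S → ℝ) (γ : ℝ) (σ : S) (V : S → ℝ) : S → ℝ :=
  fun s => if s = σ then bellmanT P R γ V s else V s

lemma abs_le_supNorm {S : Type*} [Fintype S] [Nonempty S] (V : S → ℝ) (s : S) :
    |V s| ≤ supNorm V := Finset.le_sup' (fun s => |V s|) (Finset.mem_univ s)

lemma supNorm_le {S : Type*} [Fintype S] [Nonempty S] {V : S → ℝ} {c : ℝ}
    (h : ∀ s, |V s| ≤ c) : supNorm V ≤ c :=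
  Finset.sup'_le _ _ fun s _ => h s

lemma supNorm_nonneg {S : Type*} [Fintype S] [Nonempty S] (V : S → ℝ) : 0 ≤ supNorm V := by
  obtain ⟨s⟩ := ‹Nonempty S›
  exact le_trans (abs_nonneg _) (abs_le_supNorm V s)

lemma sup'_abs_sub_le {A : Type*} [Fintype A] [Nonempty A] {f g : A → ℝ} {c : ℝ}
    (h : ∀ a, |f a - g a| ≤ c) :
    |Finset.univ.sup' Finset.univ_nonempty f - Finset.univ.sup' Finset.univ_nonempty g| ≤ c := by
  rw [abs_sub_le_iff]
  constructor
  · rw [sub_le_iff_le_add]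
    apply Finset.sup'_le
    intro a _
    have := (abs_le.1 (h a)).2
    have hg : g a ≤ Finset.univ.sup' Finset.univ_nonempty g := Finset.le_sup' _ (Finset.mem_univ a)
    linarith
  · rw [sub_le_iff_le_add]
    apply Finset.sup'_le
    intro a _
    have := (abs_le.1 (h a)).1
    have hf : f a ≤ Finset.univ.sup' Finset.univ_nonempty f := Finset.le_sup' _ (Finset.mem_univ a)
    linarith

lemma bellman_contract {S A : Type*} [Fintype S] [Nonempty S] [Fintype A] [Nonempty A]
    (P R : S → A → S → ℝ)
    (hP0 : ∀ s a s', 0 ≤ P s a s') (hP1 : ∀ s a, ∑ s', P s a s' = 1)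
    {γ : ℝ} (hγ0 : 0 ≤ γ) (V W : S → ℝ) (s : S) :
    |bellmanT P R γ V s - bellmanT P R γ W s| ≤ γ * supNorm (V - W) := by
  apply sup'_abs_sub_le
  intro a
  rw [← Finset.sum_sub_distrib]
  calc |∑ s', (P s a s' * (R s a s' + γ * V s') - P s a s' * (R s a s' + γ * W s'))|
      ≤ ∑ s', |P s a s' * (R s a s' + γ * V s') - P s a s' * (R s a s' + γ * W s')| :=
        Finset.abs_sum_le_sum_abs _ _
    _ ≤ ∑ s', P s a s' * (γ * supNorm (V - W)) := by
        apply Finset.sum_le_sum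
        intro s' _
        have : P s a s' * (R s a s' + γ * V s') - P s a s' * (R s a s' + γ * W s')
            = P s a s' * (γ * (V s' - W s')) := by ring
        rw [this, abs_mul, abs_of_nonneg (hP0 s a s'), abs_mul, abs_of_nonneg hγ0]
        have h1 : |V s' - W s'| ≤ supNorm (V - W) := abs_le_supNorm (V - W) s'
        exact mul_le_mul_of_nonneg_left (mul_le_mul_of_nonneg_left h1 hγ0) (hP0 s a s')
    _ = γ * supNorm (V - W) := by rw [← Finset.sum_mul, hP1, one_mul]

theorem noisy_async_sweep_recursion (n : ℕ) [NeZero n] (A : Type*) [Fintype A] [Nonempty A]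
    (P R : Fin n → A → Fin n → ℝ)
    (hP0 : ∀ s a s', 0 ≤ P s a s') (hP1 : ∀ s a, ∑ s', P s a s' = 1)
    (γ : ℝ) (hγ0 : 0 ≤ γ) (hγ1 : γ < 1)
    (ε : ℝ) (hε : 0 ≤ ε) (σ : ℕ → Fin n)
    (V Vt : ℕ → Fin n → ℝ) (wt : ℕ → ℝ)
    (hV : ∀ j, V (j + 1) = asyncF P R γ (σ j) (V j))
    (hwt : ∀ j, |wt j| ≤ ε)
    (hVt1 : ∀ j, Vt (j + 1) (σ j) = bellmanT P R γ (Vt j) (σ j) + wt j)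
    (hVt2 : ∀ j s, s ≠ σ j → Vt (j + 1) s = Vt j s)
    (k k' : ℕ) (hk : k ≤ k')
    (hcover : ∀ s : Fin n, ∃ j, k ≤ j ∧ j < k' ∧ σ j = s) :
    supNorm (V k' - Vt k') ≤ γ * supNorm (V k - Vt k) + ((k' - k : ℕ) : ℝ) * ε := by
  set D : ℕ → ℝ := fun j => supNorm (V j - Vt j) with hD
  -- bound at the updated state
  have hupd : ∀ j, |V (j+1) (σ j) - Vt (j+1) (σ j)| ≤ γ * D j + ε := by
    intro j
    have h1 : V (j+1) (σ j) = bellmanT P R γ (V j) (σ j) := by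
      rw [hV j]; simp [asyncF]
    rw [h1, hVt1 j]
    calc |bellmanT P R γ (V j) (σ j) - (bellmanT P R γ (Vt j) (σ j) + wt j)|
        ≤ |bellmanT P R γ (V j) (σ j) - bellmanT P R γ (Vt j) (σ j)| + |wt j| := by
          rw [sub_add_eq_sub_sub]; exact abs_sub _ _
      _ ≤ γ * D j + ε := by
          have := bellman_contract P R hP0 hP1 hγ0 (V j) (Vt j) (σ j)
          have := hwt j
          simp only [hD]
          gcongr <;> assumption
  have hsame : ∀ j s, s ≠ σ j → V (j+1) s - Vt (j+1) s = V j s - Vt j s := by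
    intro j s hs
    rw [hV j, hVt2 j s hs]
    simp [asyncF, hs]
  -- D grows by at most ε each step
  have hstep : ∀ j, D (j+1) ≤ D j + ε := by
    intro j
    apply supNorm_le
    intro s
    by_cases hs : s = σ j
    · subst hs
      have := hupd j
      have hDn : 0 ≤ D j := supNorm_nonneg _
      simp only [Pi.sub_apply]
      nlinarith
    · simp only [Pi.sub_apply]
      rw [hsame j s hs]
      have : |V j s - Vt j s| ≤ D j := abs_le_supNorm (V j - Vt j) s
      linarith
  have hgrow : ∀ j, k ≤ j → D j ≤ D k + ((j - k : ℕ) : ℝ) * ε := by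
    intro j hj
    induction j, hj using Nat.le_induction with
    | base => simp
    | succ m hm ih =>
      have := hstep m
      have hc : ((m + 1 - k : ℕ) : ℝ) = ((m - k : ℕ) : ℝ) + 1 := by
        have : m + 1 - k = (m - k) + 1 := by omega
        rw [this]; push_cast; ring
      rw [hc]
      linarith
  -- per-state bound after update
  have hper : ∀ s : Fin n, |V k' s - Vt k' s| ≤ γ * D k + ((k' - k : ℕ) : ℝ) * ε := by
    intro s
    obtain ⟨j, hkj, hjk', hσ⟩ := hcover s
    have key : ∀ m, j + 1 ≤ m → m ≤ k' → |V m s - Vt m s| ≤ γ * D k + ((m - k : ℕ) : ℝ) * ε := by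
      intro m hm
      induction m, hm using Nat.le_induction with
      | base =>
        intro _
        have h1 : |V (j+1) s - Vt (j+1) s| ≤ γ * D j + ε := hσ ▸ hupd j
        have h2 : D j ≤ D k + ((j - k : ℕ) : ℝ) * ε := hgrow j hkj
        have hc : ((j + 1 - k : ℕ) : ℝ) = ((j - k : ℕ) : ℝ) + 1 := by
          have : j + 1 - k = (j - k) + 1 := by omega
          rw [this]; push_cast; ring
        rw [hc]
        have hc0 : (0:ℝ) ≤ ((j - k : ℕ):ℝ) * ε := mul_nonneg (by positivity) hε
        nlinarith [mul_le_mul_of_nonneg_left h2 hγ0, mul_nonneg (sub_nonneg.2 hγ1.le) hc0]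
      | succ m hm ih =>
        intro hm'
        have hmk' : m ≤ k' := by omega
        have hc : ((m + 1 - k : ℕ) : ℝ) = ((m - k : ℕ) : ℝ) + 1 := by
          have hkm : k ≤ m := by omega
          have : m + 1 - k = (m - k) + 1 := by omega
          rw [this]; push_cast; ring
        by_cases hs : s = σ m
        · subst hs
          have h1 := hupd m
          have h2 : D m ≤ D k + ((m - k : ℕ) : ℝ) * ε := hgrow m (by omega)
          rw [hc]
          have hc0 : (0:ℝ) ≤ ((m - k : ℕ):ℝ) * ε := mul_nonneg (by positivity) hε
          nlinarith [mul_le_mul_of_nonneg_left h2 hγ0, mul_nonneg (sub_nonneg.2 hγ1.le) hc0]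
        · rw [hsame m s hs, hc]
          have := ih hmk'
          nlinarith
    have hjk : j + 1 ≤ k' := hjk'
    exact key k' hjk le_rfl
  calc supNorm (V k' - Vt k') ≤ γ * D k + ((k' - k : ℕ) : ℝ) * ε :=
        supNorm_le fun s => hper s
    _ = γ * supNorm (V k - Vt k) + ((k' - k : ℕ) : ℝ) * ε := rfl
end
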